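/- arXiv:2108.09035 — 3 statements merged into one kernel-verified Lean document; each statement's English description precedes it below -/
import Mathlib

section
/- Define f(z) := ((δ(1-k)-1)/(δ(1-k))) L̄^{(1-k)(1-δ)/(1-δ(1-k))} z^{δ(1-k)/(δ(1-k)-1)} + (k/(δ(1-k)))((1-δ)/(δw))^{(1-k)(1-δ)/k} z^{-(1-k)/k} + wL̄z for z>0, and ỹ₁ := L̄^{-k}((1-δ)/(δw))^{1-δ(1-k)}. Then f(ỹ₁) = 0 and f'(ỹ₁) = 0. -/
/-! At `ỹ₁ = L̄^{-k} B^{1-δ(1-k)}`, with `B = (1-δ)/(δw)`, each of the three terms of `f`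
collapses to a rational multiple of the same monomial `C = L̄^{1-k} B^{-δ(1-k)}`, and so do
the three terms of `z f'(z)`. Both coefficient sums vanish identically in `k` and `δ`. -/

open Real

theorem mul_deriv_rpow_add_rpow_add_mul {a b c p q z : ℝ} (hz : z ≠ 0) :
    z * deriv (fun z => a * z ^ p + b * z ^ q + c * z) z =
      p * (a * z ^ p) + q * (b * z ^ q) + c * z := by
  have hd : HasDerivAt (fun z => a * z ^ p + b * z ^ q + c * z)
      (a * (p * z ^ (p - 1)) + b * (q * z ^ (q - 1)) + c * 1) z :=
    (((hasDerivAt_rpow_const (Or.inl hz)).const_mul a).add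
      ((hasDerivAt_rpow_const (Or.inl hz)).const_mul b)).add ((hasDerivAt_id z).const_mul c)
  rw [hd.deriv, rpow_sub_one hz, rpow_sub_one hz]
  field_simp

theorem rpow_add_rpow_add_mul_eq_zero_and_deriv_eq_zero {a b c p q z C α β γ : ℝ} (hz : z ≠ 0)
    (ha : a * z ^ p = α * C) (hb : b * z ^ q = β * C) (hc : c * z = γ * C)
    (hsum : α + β + γ = 0) (hsum' : p * α + q * β + γ = 0) :
    a * z ^ p + b * z ^ q + c * z = 0 ∧
      deriv (fun z => a * z ^ p + b * z ^ q + c * z) z = 0 := by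
  refine ⟨by linear_combination ha + hb + hc + C * hsum, (mul_eq_zero.mp ?_).resolve_left hz⟩
  rw [mul_deriv_rpow_add_rpow_add_mul hz]
  linear_combination p * ha + q * hb + hc + C * hsum'

/-- The auxiliary function f satisfies f(ỹ₁) = 0 and f'(ỹ₁) = 0,
where ỹ₁ = L̄^{-k} ((1-δ)/(δw))^{1-δ(1-k)}. -/
theorem stmt9 (k δ w Lbar : ℝ)
    (hk : 1 < k) (hδ0 : 0 < δ) (hδ1 : δ < 1) (hw : 0 < w) (hLbar : 0 < Lbar)
    (f : ℝ → ℝ)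
    (hf : ∀ z, f z = (δ * (1 - k) - 1) / (δ * (1 - k)) *
      Lbar ^ ((1 - k) * (1 - δ) / (1 - δ * (1 - k))) * z ^ (δ * (1 - k) / (δ * (1 - k) - 1)) +
      k / (δ * (1 - k)) * ((1 - δ) / (δ * w)) ^ ((1 - k) * (1 - δ) / k) * z ^ (-(1 - k) / k) +
      w * Lbar * z)
    (ytilde₁ : ℝ)
    (hytilde₁ : ytilde₁ = Lbar ^ (-k) * ((1 - δ) / (δ * w)) ^ (1 - δ * (1 - k))) :
    f ytilde₁ = 0 ∧ deriv f ytilde₁ = 0 := by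
  have hB : 0 < (1 - δ) / (δ * w) := div_pos (by linarith) (by positivity)
  have hk0 : k ≠ 0 := by positivity
  have hD : δ * (1 - k) < 0 := mul_neg_of_pos_of_neg hδ0 (by linarith)
  set D := δ * (1 - k) with hD_def
  have hD0 : D ≠ 0 := hD.ne
  have hD1 : D - 1 ≠ 0 := by linarith
  have h1D : 1 - D ≠ 0 := by linarith
  set B := (1 - δ) / (δ * w) with hB_def
  have hy_pos : 0 < ytilde₁ := hytilde₁ ▸ by positivity
  have hy : ∀ t, ytilde₁ ^ t = Lbar ^ (-k * t) * B ^ ((1 - D) * t) := fun t => by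
    rw [hytilde₁, mul_rpow (by positivity) (by positivity), ← rpow_mul hLbar.le,
      ← rpow_mul hB.le]
  have h1 : Lbar ^ ((1 - k) * (1 - δ) / (1 - D)) * ytilde₁ ^ (D / (D - 1)) =
      Lbar ^ (1 - k) * B ^ (-D) := by
    rw [hy, ← mul_assoc, ← rpow_add hLbar]
    congr 2 <;> field_simp <;> ring
  have h2 : B ^ ((1 - k) * (1 - δ) / k) * ytilde₁ ^ (-(1 - k) / k) =
      Lbar ^ (1 - k) * B ^ (-D) := by
    rw [hy, mul_left_comm, ← rpow_add hB]
    congr 2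
    · field_simp
    · field_simp; ring
  have h3 : Lbar * ytilde₁ = B * (Lbar ^ (1 - k) * B ^ (-D)) := by
    rw [hytilde₁, rpow_sub hLbar, rpow_sub hB, rpow_one, rpow_one, rpow_neg hLbar.le,
      rpow_neg hB.le]
    field_simp
  have hwB : w * B = (1 - δ) / δ := by
    rw [hB_def]; field_simp
  rw [hf, funext hf]
  refine rpow_add_rpow_add_mul_eq_zero_and_deriv_eq_zero (C := Lbar ^ (1 - k) * B ^ (-D))
    (α := (D - 1) / D) (β := k / D) (γ := (1 - δ) / δ) hy_pos.ne'
    (by rw [mul_assoc, h1]) (by rw [mul_assoc, h2]) (by rw [mul_assoc, h3, ← hwB]; ring) ?_ ?_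
  all_goals field_simp; rw [hD_def]; ring
end

section
/- With f and ỹ₁ as above, the second derivative f''(z) = (1/(δ(1-k)-1)) z^{(2-δ(1-k))/(δ(1-k)-1)} L̄^{(1-k)(1-δ)/(1-δ(1-k))} + (1/(δk))((1-δ)/(δw))^{(1-k)(1-δ)/k} z^{-(1+k)/k} is strictly positive if and only if z > L̄^{-k} ((1-δ(1-k))/(δk))^{k(δ(1-k)-1)/((1-k)(δ-1))} ((1-δ)/(δw))^{1-δ(1-k)}. -/
/-!
With `c = δ(1-k) < 0`, the power terms of `f` have exponents `a = c/(c-1)` and `b = -(1-k)/k`;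
differentiating twice kills the linear term, and the coefficients `a(a-1)`, `b(b-1)` collapse to
those of `f''`. As `1/(c-1) < 0`, positivity of `f''(z)` reads `A z^p < B z^q` with `A, B > 0` and
`q - p = (k-1)(1-δ)/(k(1-c)) > 0`, i.e. `A/B < z^(q-p)`, i.e. `T < z` for the positive `T` with
`T^(q-p) = A/B`; the stated threshold is that `T`.
-/

open Real Topology

theorem deriv_deriv_mul_rpow_add_mul_rpow_add_mul (A B C a b : ℝ) {z : ℝ} (hz : z ≠ 0) :
    deriv (deriv fun x => A * x ^ a + B * x ^ b + C * x) z =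
      A * (a * (a - 1)) * z ^ (a - 2) + B * (b * (b - 1)) * z ^ (b - 2) := by
  have hderiv : deriv (fun x => A * x ^ a + B * x ^ b + C * x) =ᶠ[𝓝 z]
      fun x => A * (a * x ^ (a - 1)) + B * (b * x ^ (b - 1)) + C := by
    filter_upwards [eventually_ne_nhds hz] with x hx
    refine ((((hasDerivAt_rpow_const (Or.inl hx)).const_mul A).add
      ((hasDerivAt_rpow_const (Or.inl hx)).const_mul B)).add ?_).deriv
    simpa using (hasDerivAt_id x).const_mul C
  rw [hderiv.deriv_eq]
  have h : HasDerivAt (fun x => A * (a * x ^ (a - 1)) + B * (b * x ^ (b - 1)) + C)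
      (A * (a * ((a - 1) * z ^ (a - 1 - 1))) + B * (b * ((b - 1) * z ^ (b - 1 - 1))) + 0) z :=
    ((((hasDerivAt_rpow_const (Or.inl hz)).const_mul a).const_mul A).add
      (((hasDerivAt_rpow_const (Or.inl hz)).const_mul b).const_mul B)).add (hasDerivAt_const z C)
  rw [h.deriv]
  ring_nf

theorem mul_rpow_lt_mul_rpow_add_iff {A B T e p z : ℝ} (hz : 0 < z) (hB : 0 < B)
    (he : 0 < e) (hT : 0 ≤ T) (hTe : T ^ e = A / B) :
    A * z ^ p < B * z ^ (p + e) ↔ T < z := by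
  rw [rpow_add hz, mul_left_comm, mul_comm A, mul_lt_mul_iff_right₀ (rpow_pos_of_pos hz p),
    ← div_lt_iff₀' hB, ← hTe, rpow_lt_rpow_iff hT hz.le he]

noncomputable def F (k δ w L z : ℝ) : ℝ :=
  (δ * (1 - k) - 1) / (δ * (1 - k)) *
      L ^ ((1 - k) * (1 - δ) / (1 - δ * (1 - k))) * z ^ (δ * (1 - k) / (δ * (1 - k) - 1)) +
    k / (δ * (1 - k)) * ((1 - δ) / (δ * w)) ^ ((1 - k) * (1 - δ) / k) * z ^ (-(1 - k) / k) +
    w * L * z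

noncomputable def F'' (k δ w L z : ℝ) : ℝ :=
  1 / (δ * (1 - k) - 1) * z ^ ((2 - δ * (1 - k)) / (δ * (1 - k) - 1)) *
      L ^ ((1 - k) * (1 - δ) / (1 - δ * (1 - k))) +
    1 / (δ * k) * ((1 - δ) / (δ * w)) ^ ((1 - k) * (1 - δ) / k) * z ^ (-(1 + k) / k)

noncomputable def convexityThreshold (k δ w L : ℝ) : ℝ :=
  L ^ (-k) * ((1 - δ * (1 - k)) / (δ * k)) ^ (k * (δ * (1 - k) - 1) / ((1 - k) * (δ - 1))) *
    ((1 - δ) / (δ * w)) ^ (1 - δ * (1 - k))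

variable {k δ w L z : ℝ}

theorem convexityThreshold_rpow (hk : 1 < k) (hδ0 : 0 < δ) (hδ1 : δ < 1) (hw : 0 < w)
    (hL : 0 < L) :
    convexityThreshold k δ w L ^ ((k - 1) * (1 - δ) / (k * (1 - δ * (1 - k)))) =
      1 / (1 - δ * (1 - k)) * L ^ ((1 - k) * (1 - δ) / (1 - δ * (1 - k))) /
        (1 / (δ * k) * ((1 - δ) / (δ * w)) ^ ((1 - k) * (1 - δ) / k)) := by
  have hc : 0 < 1 - δ * (1 - k) := by nlinarith
  have hR : 0 < (1 - δ) / (δ * w) := div_pos (by linarith) (by positivity)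
  have hM : 0 < (1 - δ * (1 - k)) / (δ * k) := div_pos hc (by positivity)
  have h1k : 1 - k ≠ 0 := by linarith
  have hδ1' : δ - 1 ≠ 0 := by linarith
  rw [convexityThreshold, mul_rpow (by positivity) (by positivity),
    mul_rpow (by positivity) (by positivity), ← rpow_mul hL.le, ← rpow_mul hM.le,
    ← rpow_mul hR.le]
  have hL_exp : -k * ((k - 1) * (1 - δ) / (k * (1 - δ * (1 - k)))) =
      (1 - k) * (1 - δ) / (1 - δ * (1 - k)) := by
    field_simp; ring
  have hM_exp : k * (δ * (1 - k) - 1) / ((1 - k) * (δ - 1)) *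
      ((k - 1) * (1 - δ) / (k * (1 - δ * (1 - k)))) = -1 := by
    field_simp; ring
  have hR_exp : (1 - δ * (1 - k)) * ((k - 1) * (1 - δ) / (k * (1 - δ * (1 - k)))) =
      -((1 - k) * (1 - δ) / k) := by
    field_simp; ring
  rw [hL_exp, hM_exp, hR_exp, rpow_neg_one, rpow_neg hR.le]
  field_simp

theorem deriv_deriv_F (hk : 1 < k) (hδ : 0 < δ) (hz : z ≠ 0) :
    deriv (deriv (F k δ w L)) z = F'' k δ w L z := by
  have h1k : 1 - k ≠ 0 := by linarith
  have hc : δ * (1 - k) < 0 := mul_neg_of_pos_of_neg hδ (by linarith)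
  have hc1 : δ * (1 - k) - 1 ≠ 0 := by linarith
  have ha : δ * (1 - k) / (δ * (1 - k) - 1) - 2 = (2 - δ * (1 - k)) / (δ * (1 - k) - 1) := by
    field_simp; ring
  have hb : -(1 - k) / k - 2 = -(1 + k) / k := by
    field_simp; ring
  have hA : (δ * (1 - k) - 1) / (δ * (1 - k)) * (δ * (1 - k) / (δ * (1 - k) - 1) *
      (δ * (1 - k) / (δ * (1 - k) - 1) - 1)) = 1 / (δ * (1 - k) - 1) := by
    field_simp; ring
  have hB : k / (δ * (1 - k)) * (-(1 - k) / k * (-(1 - k) / k - 1)) = 1 / (δ * k) := by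
    field_simp; ring
  unfold F
  rw [deriv_deriv_mul_rpow_add_mul_rpow_add_mul _ _ _ _ _ hz, ha, hb, F'']
  linear_combination
    L ^ ((1 - k) * (1 - δ) / (1 - δ * (1 - k))) *
      z ^ ((2 - δ * (1 - k)) / (δ * (1 - k) - 1)) * hA +
    ((1 - δ) / (δ * w)) ^ ((1 - k) * (1 - δ) / k) * z ^ (-(1 + k) / k) * hB

theorem F''_pos_iff (hk : 1 < k) (hδ0 : 0 < δ) (hδ1 : δ < 1) (hw : 0 < w) (hL : 0 < L)
    (hz : 0 < z) : 0 < F'' k δ w L z ↔ convexityThreshold k δ w L < z := by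
  have hD : 0 < 1 - δ * (1 - k) := by nlinarith
  have hc1 : δ * (1 - k) - 1 ≠ 0 := by linarith
  have hq : -(1 + k) / k = (2 - δ * (1 - k)) / (δ * (1 - k) - 1) +
      (k - 1) * (1 - δ) / (k * (1 - δ * (1 - k))) := by
    field_simp; ring
  have hsign : 1 / (δ * (1 - k) - 1) = -(1 / (1 - δ * (1 - k))) := by
    field_simp; ring
  have hF'' : F'' k δ w L z = 1 / (δ * k) * ((1 - δ) / (δ * w)) ^ ((1 - k) * (1 - δ) / k) *
        z ^ ((2 - δ * (1 - k)) / (δ * (1 - k) - 1) +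
          (k - 1) * (1 - δ) / (k * (1 - δ * (1 - k)))) -
      1 / (1 - δ * (1 - k)) * L ^ ((1 - k) * (1 - δ) / (1 - δ * (1 - k))) *
        z ^ ((2 - δ * (1 - k)) / (δ * (1 - k) - 1)) := by
    rw [F'', ← hq]
    linear_combination
      L ^ ((1 - k) * (1 - δ) / (1 - δ * (1 - k))) *
        z ^ ((2 - δ * (1 - k)) / (δ * (1 - k) - 1)) * hsign
  rw [hF'', sub_pos]
  exact mul_rpow_lt_mul_rpow_add_iff hz (by positivity)
    (div_pos (mul_pos (by linarith) (by linarith)) (mul_pos (by positivity) hD))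
    (by unfold convexityThreshold; positivity)
    (convexityThreshold_rpow hk hδ0 hδ1 hw hL)

/-- For z>0, the second derivative of f equals the stated expression and is
strictly positive iff z > L̄^{-k} ((1-δ(1-k))/(δk))^{k(δ(1-k)-1)/((1-k)(δ-1))} ((1-δ)/(δw))^{1-δ(1-k)}. -/
theorem stmt10 (k δ w Lbar : ℝ)
    (hk : 1 < k) (hδ0 : 0 < δ) (hδ1 : δ < 1) (hw : 0 < w) (hLbar : 0 < Lbar)
    (f : ℝ → ℝ)
    (hf : ∀ z, f z = (δ * (1 - k) - 1) / (δ * (1 - k)) *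
      Lbar ^ ((1 - k) * (1 - δ) / (1 - δ * (1 - k))) * z ^ (δ * (1 - k) / (δ * (1 - k) - 1)) +
      k / (δ * (1 - k)) * ((1 - δ) / (δ * w)) ^ ((1 - k) * (1 - δ) / k) * z ^ (-(1 - k) / k) +
      w * Lbar * z)
    (g : ℝ → ℝ)
    (hg : ∀ z, g z = 1 / (δ * (1 - k) - 1) * z ^ ((2 - δ * (1 - k)) / (δ * (1 - k) - 1)) *
      Lbar ^ ((1 - k) * (1 - δ) / (1 - δ * (1 - k))) +
      1 / (δ * k) * ((1 - δ) / (δ * w)) ^ ((1 - k) * (1 - δ) / k) * z ^ (-(1 + k) / k)) :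
    ∀ z > (0 : ℝ),
      deriv (deriv f) z = g z ∧
      (0 < g z ↔ Lbar ^ (-k) * ((1 - δ * (1 - k)) / (δ * k)) ^
          (k * (δ * (1 - k) - 1) / ((1 - k) * (δ - 1))) *
          ((1 - δ) / (δ * w)) ^ (1 - δ * (1 - k)) < z) := by
  intro z hz
  obtain rfl : f = F k δ w Lbar := funext hf
  obtain rfl : g = F'' k δ w Lbar := funext hg
  exact ⟨deriv_deriv_F hk hδ0 hz.ne', F''_pos_iff hk hδ0 hδ1 hw hLbar hz⟩
end

section
/- Let v_PR be defined piecewise by v_PR(z) = B₂ z^{n₂} + ((1-δ(1-k))/(δ(1-k))) K₁ L̄^{(1-k)(1-δ)/(1-δ(1-k))} z^{δ(1-k)/(δ(1-k)-1)} - (d/r)z for 0<z<ẑ, and v_PR(z) = v_PR(ẑ) - R_post(z-ẑ) for z≥ẑ, where B₂ = B_{2,PR} and ẑ = ẑ_PR satisfy the two smooth-fit equations: (C¹) n₂B₂ẑ^{n₂-1} - K₁L̄^{(1-k)(1-δ)/(1-δ(1-k))}ẑ^{1/(δ(1-k)-1)} - d/r + R_post = 0 and (C²) n₂(n₂-1)B₂ẑ^{n₂-2}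 - (K₁/(δ(1-k)-1))L̄^{(1-k)(1-δ)/(1-δ(1-k))}ẑ^{(2-δ(1-k))/(δ(1-k)-1)} = 0. Then these two equations have the unique solution ẑ = L̄^{(1-k)(1-δ)}[((1-n₂)(1-δ(1-k)))/(n₂(δ(1-k)-1)-δ(1-k)) · (R_post-d/r)/K₁]^{δ(1-k)-1} and B₂ẑ^{n₂-1} = (K₁ δ(1-k)/((δ(1-k)-1)n₂²)) L̄^{(1-k)(1-δ)/(1-δ(1-k))} ẑ^{1/(δ(1-k)-1)} + (1/n₂²)(d/r - R_post). -/
/-!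
With `α = δ(1-k) - 1`, multiplying (C²) by `ẑ` turns the two smooth-fit conditions into a linear
system in `X = B₂ ẑ^{n₂-1}` and `Q = K₁ L̄^{(1-k)(1-δ)/(1-δ(1-k))} ẑ^{1/α}`:
`n₂ X - Q = d/r - R_post` and `α n₂ (n₂ - 1) X = Q`. Since `α < 0 < n₂ - 1` its determinant
does not vanish, and solving it gives `X` and `Q`; raising `Q / K₁` to the power `α` recovers `ẑ`.
-/

open Real

theorem smoothFit_power_term_eq {n α s X Q : ℝ} (hα : α * (n - 1) ≠ 1)
    (h1 : n * X = Q + s) (h2 : α * (n * (n - 1) * X) = Q) :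
    Q = α * (n - 1) * s / (1 - α * (n - 1)) := by
  rw [eq_div_iff (sub_ne_zero.2 hα.symm)]
  linear_combination α * (n - 1) * h1 - h2

theorem smoothFit_coeff_eq {n α s X Q : ℝ} (hn : n ≠ 0) (hα : α ≠ 0)
    (h1 : n * X = Q + s) (h2 : α * (n * (n - 1) * X) = Q) :
    X = (α + 1) * Q / (α * n ^ 2) + s / n ^ 2 := by
  field_simp
  linear_combination α * h1 + h2

theorem smoothFit_mul_self_of_eq_zero {n a B K M z : ℝ} (hz : 0 < z) (ha : a - 1 ≠ 0)
    (h : n * (n - 1) * B * z ^ (n - 2) - K / (a - 1) * M * z ^ ((2 - a) / (a - 1)) = 0) :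
    (a - 1) * (n * (n - 1) * (B * z ^ (n - 1))) = K * M * z ^ (1 / (a - 1)) := by
  have hB : z ^ (n - 1) = z ^ (n - 2) * z := by
    rw [← rpow_add_one hz.ne']
    ring_nf
  have hKM : z ^ (1 / (a - 1)) = z ^ ((2 - a) / (a - 1)) * z := by
    rw [← rpow_add_one hz.ne']
    congr 1
    field_simp
    ring
  rw [hB, hKM]
  field_simp at h
  linear_combination z * h

theorem rpow_mul_rpow_div_neg_mul_rpow_one_div_rpow {x y c α : ℝ} (hx : 0 < x) (hy : 0 < y)
    (hα : α ≠ 0) : x ^ c * (x ^ (c / -α) * y ^ (1 / α)) ^ α = y := by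
  rw [mul_rpow (by positivity) (by positivity), ← rpow_mul hx.le, ← rpow_mul hy.le, ← mul_assoc,
    ← rpow_add hx, one_div_mul_cancel hα, rpow_one, div_neg, neg_mul, div_mul_cancel₀ c hα,
    add_neg_cancel, rpow_zero, one_mul]

theorem stmt17_general (k δ r d Rpost Lbar K₁ n₂ B₂ zhat : ℝ)
    (hk : 1 < k) (hδ0 : 0 < δ) (hLbar : 0 < Lbar)
    (hK₁ : 0 < K₁) (hn₂ : 1 < n₂)
    (hzhat : 0 < zhat)
    (hC1 : n₂ * B₂ * zhat ^ (n₂ - 1) -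
      K₁ * Lbar ^ ((1 - k) * (1 - δ) / (1 - δ * (1 - k))) * zhat ^ (1 / (δ * (1 - k) - 1)) -
      d / r + Rpost = 0)
    (hC2 : n₂ * (n₂ - 1) * B₂ * zhat ^ (n₂ - 2) -
      K₁ / (δ * (1 - k) - 1) * Lbar ^ ((1 - k) * (1 - δ) / (1 - δ * (1 - k))) *
        zhat ^ ((2 - δ * (1 - k)) / (δ * (1 - k) - 1)) = 0) :
    zhat = Lbar ^ ((1 - k) * (1 - δ)) *
      ((1 - n₂) * (1 - δ * (1 - k)) / (n₂ * (δ * (1 - k) - 1) - δ * (1 - k)) *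
        ((Rpost - d / r) / K₁)) ^ (δ * (1 - k) - 1) ∧
    B₂ * zhat ^ (n₂ - 1) =
      K₁ * (δ * (1 - k)) / ((δ * (1 - k) - 1) * n₂ ^ 2) *
        Lbar ^ ((1 - k) * (1 - δ) / (1 - δ * (1 - k))) * zhat ^ (1 / (δ * (1 - k) - 1)) +
      1 / n₂ ^ 2 * (d / r - Rpost) := by
  have hα : δ * (1 - k) - 1 < 0 := by nlinarith
  have hdet : (δ * (1 - k) - 1) * (n₂ - 1) < 1 := by nlinarith
  have h1 : n₂ * (B₂ * zhat ^ (n₂ - 1)) = K₁ * Lbar ^ ((1 - k) * (1 - δ) / (1 - δ * (1 - k))) *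
      zhat ^ (1 / (δ * (1 - k) - 1)) + (d / r - Rpost) := by
    linear_combination hC1
  have h2 := smoothFit_mul_self_of_eq_zero hzhat hα.ne hC2
  refine ⟨?_, ?_⟩
  · have hQ := smoothFit_power_term_eq hdet.ne h1 h2
    have hbase : (1 - n₂) * (1 - δ * (1 - k)) / (n₂ * (δ * (1 - k) - 1) - δ * (1 - k)) *
        ((Rpost - d / r) / K₁) =
        Lbar ^ ((1 - k) * (1 - δ) / -(δ * (1 - k) - 1)) * zhat ^ (1 / (δ * (1 - k) - 1)) := by
      rw [neg_sub, ← mul_right_inj' hK₁.ne', ← mul_assoc K₁ (Lbar ^ _), hQ]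
      have : n₂ * (δ * (1 - k) - 1) - δ * (1 - k) ≠ 0 := by nlinarith
      have : 1 - (δ * (1 - k) - 1) * (n₂ - 1) ≠ 0 := by linarith
      field_simp
      ring
    rw [hbase, rpow_mul_rpow_div_neg_mul_rpow_one_div_rpow hLbar hzhat hα.ne]
  · rw [smoothFit_coeff_eq (by positivity) hα.ne h1 h2]
    ring

/-- The two smooth-fit equations (C¹) and (C²) uniquely determine the free
boundary ẑ = ẑ_PR and the combination B₂ ẑ^{n₂-1} of the post-retirement dual problem. -/
theorem stmt17 (k δ r d Rpost Lbar K₁ n₂ B₂ zhat : ℝ)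
    (hk : 1 < k) (hδ0 : 0 < δ) (hδ1 : δ < 1) (hLbar : 0 < Lbar)
    (hr : 0 < r) (hd : 0 ≤ d) (hK₁ : 0 < K₁) (hn₂ : 1 < n₂)
    (hRpost : d / r < Rpost) (hzhat : 0 < zhat)
    (hC1 : n₂ * B₂ * zhat ^ (n₂ - 1) -
      K₁ * Lbar ^ ((1 - k) * (1 - δ) / (1 - δ * (1 - k))) * zhat ^ (1 / (δ * (1 - k) - 1)) -
      d / r + Rpost = 0)
    (hC2 : n₂ * (n₂ - 1) * B₂ * zhat ^ (n₂ - 2) -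
      K₁ / (δ * (1 - k) - 1) * Lbar ^ ((1 - k) * (1 - δ) / (1 - δ * (1 - k))) *
        zhat ^ ((2 - δ * (1 - k)) / (δ * (1 - k) - 1)) = 0) :
    zhat = Lbar ^ ((1 - k) * (1 - δ)) *
      ((1 - n₂) * (1 - δ * (1 - k)) / (n₂ * (δ * (1 - k) - 1) - δ * (1 - k)) *
        ((Rpost - d / r) / K₁)) ^ (δ * (1 - k) - 1) ∧
    B₂ * zhat ^ (n₂ - 1) =
      K₁ * (δ * (1 - k)) / ((δ * (1 - k) - 1) * n₂ ^ 2) *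
        Lbar ^ ((1 - k) * (1 - δ) / (1 - δ * (1 - k))) * zhat ^ (1 / (δ * (1 - k) - 1)) +
      1 / n₂ ^ 2 * (d / r - Rpost) :=
  stmt17_general k δ r d Rpost Lbar K₁ n₂ B₂ zhat hk hδ0 hLbar hK₁ hn₂ hzhat hC1 hC2
end
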